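/- Fix $k \in \mathbb{N}$, $d \geq 2$, $\beta \in \mathbb{R}$, and $f_0 > 0$. For $t > 0$ define $r_t \geq 0$ by $t f_0 \theta_d r_t^d = \max(\log t + (k-1)\log\log t + \beta, 0)$, and let $Z_t$ be a Poisson random variable with mean $t f_0 \theta_d r_t^d$. Then as $t \to \infty$, with $j := k-1$, $$t\, \Pr[Z_t < k] = \frac{e^{-\beta}}{j!}\Big(1 + \frac{j^2 \log\log t}{\log t} + \frac{j(1+\beta)}{\log t} + O\Big(\Big(\frac{\log\log t}{\log t}\Big)^2\Big)\Big).$$ -/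

import Mathlib

open MeasureTheory Metric Set Real

/-- θ_n, the Lebesgue volume of the unit Euclidean ball in ℝ^n. -/
noncomputable def ubv (n : ℕ) : ℝ :=
  (volume (Metric.ball (0 : EuclideanSpace ℝ (Fin n)) 1)).toReal

/-! With `L = log t` and `a = (k - 1) log L + β`, the Poisson mean is `L + a` and
`t e^{-(L + a)} = e^{-β} / L^j`, so `t Pr[Z_t < k] = e^{-β} ∑_{m ≤ j} (L + a)^m / (m! L^j)`.
Put `x = a / L`. The term `m = j` is `(1 + x)^j / j! = (1 + j x + O(x²)) / j!`, the term
`m = j - 1` is `(1 + O(x)) / ((j - 1)! L)`, and the remaining ones are `O(1 / L²)`.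
As `a = O(log L)`, every error is `O((log L / L)²)`. -/

open Finset Filter Asymptotics
open scoped Nat

section OneAddPow

variable {x : ℝ}

theorem abs_one_add_pow_sub_one_le (hx : |x| ≤ 1) (n : ℕ) :
    |(1 + x) ^ n - 1| ≤ n * 2 ^ n * |x| := by
  induction n with
  | zero => simp
  | succ n ih =>
    have h1x : |1 + x| ≤ 2 := (abs_add_le 1 x).trans (by rw [abs_one]; linarith)
    have h2n : (1 : ℝ) ≤ 2 ^ n := one_le_pow₀ (by norm_num)
    calc |(1 + x) ^ (n + 1) - 1| = |(1 + x) * ((1 + x) ^ n - 1) + x| := by ring_nf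
      _ ≤ |1 + x| * |(1 + x) ^ n - 1| + |x| := by rw [← abs_mul]; exact abs_add_le _ _
      _ ≤ 2 * (n * 2 ^ n * |x|) + |x| := by gcongr
      _ ≤ (n + 1 : ℕ) * 2 ^ (n + 1) * |x| := by
        push_cast; rw [pow_succ]; nlinarith [abs_nonneg x]

theorem abs_one_add_pow_sub_one_add_mul_le (hx : |x| ≤ 1) (n : ℕ) :
    |(1 + x) ^ n - (1 + n * x)| ≤ n ^ 2 * 2 ^ n * x ^ 2 := by
  induction n with
  | zero => simp
  | succ n ih =>
    calc |(1 + x) ^ (n + 1) - (1 + (n + 1 : ℕ) * x)|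
        = |((1 + x) ^ n - (1 + n * x)) + x * ((1 + x) ^ n - 1)| := by push_cast; ring_nf
      _ ≤ |(1 + x) ^ n - (1 + n * x)| + |x| * |(1 + x) ^ n - 1| := by
        rw [← abs_mul]; exact abs_add_le _ _
      _ ≤ n ^ 2 * 2 ^ n * x ^ 2 + |x| * (n * 2 ^ n * |x|) := by
        gcongr; exact abs_one_add_pow_sub_one_le hx n
      _ ≤ (n + 1 : ℕ) ^ 2 * 2 ^ (n + 1) * x ^ 2 := by
        have hcoef : (n : ℝ) ^ 2 + n ≤ (n + 1) ^ 2 * 2 := by nlinarith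
        have hxx : |x| * (n * 2 ^ n * |x|) = n * 2 ^ n * x ^ 2 := by
          rw [mul_left_comm, mul_assoc, abs_mul_abs_self, sq, mul_assoc]
        rw [hxx]; push_cast
        calc (n : ℝ) ^ 2 * 2 ^ n * x ^ 2 + n * 2 ^ n * x ^ 2
            = (n ^ 2 + n) * (2 ^ n * x ^ 2) := by ring
          _ ≤ (n + 1) ^ 2 * 2 * (2 ^ n * x ^ 2) := by gcongr
          _ = _ := by ring

end OneAddPow

section PartialExpSum

variable {L a : ℝ}

theorem abs_sum_range_pow_div_factorial_div_pow_le (hL : 1 ≤ L) (ha : |a| ≤ L) (q : ℕ) :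
    |∑ m ∈ range q, (L + a) ^ m / m !| / L ^ (q + 1) ≤ q * 2 ^ q / L ^ 2 := by
  have hL0 : 0 < L := by linarith
  have hterm : ∀ m ∈ range q, |(L + a) ^ m / m !| ≤ 2 ^ q * (L ^ (q + 1) / L ^ 2) := by
    intro m hm
    have hmq : m < q := mem_range.mp hm
    have hLa : |L + a| ≤ 2 * L := (abs_add_le L a).trans (by rw [abs_of_pos hL0]; linarith)
    have hpow : L ^ m ≤ L ^ (q + 1) / L ^ 2 := by
      rw [le_div_iff₀ (by positivity), ← pow_add]
      exact pow_le_pow_right₀ hL (by omega)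
    calc |(L + a) ^ m / m !| ≤ |L + a| ^ m := by
          rw [abs_div, abs_pow, Nat.abs_cast]
          exact div_le_self (by positivity) (by exact_mod_cast m.factorial_pos)
      _ ≤ (2 * L) ^ m := by gcongr
      _ = 2 ^ m * L ^ m := mul_pow _ _ _
      _ ≤ 2 ^ q * (L ^ (q + 1) / L ^ 2) := by
          gcongr
          norm_num
  calc |∑ m ∈ range q, (L + a) ^ m / m !| / L ^ (q + 1)
      ≤ (q * (2 ^ q * (L ^ (q + 1) / L ^ 2))) / L ^ (q + 1) := by
        gcongr
        refine (abs_sum_le_sum_abs _ _).trans ?_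
        simpa using sum_le_sum hterm
    _ = q * 2 ^ q / L ^ 2 := by field_simp

theorem sum_range_pow_div_factorial_div_pow_sub_eq (hL : L ≠ 0) (q : ℕ) :
    (∑ m ∈ range (q + 2), (L + a) ^ m / m !) / L ^ (q + 1)
        - (1 + (q + 1 : ℕ) * (a + 1) / L) / (q + 1) !
      = (∑ m ∈ range q, (L + a) ^ m / m !) / L ^ (q + 1)
        + ((1 + a / L) ^ q - 1) / (q ! * L)
        + ((1 + a / L) ^ (q + 1) - (1 + (q + 1 : ℕ) * (a / L))) / (q + 1) ! := by
  obtain ⟨x, rfl⟩ : ∃ x, a = L * x := ⟨a / L, by field_simp⟩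
  rw [sum_range_succ, sum_range_succ, ← mul_one_add L x, mul_div_cancel_left₀ x hL,
    Nat.factorial_succ]
  simp only [mul_pow]
  push_cast
  field_simp
  ring

theorem abs_sum_range_pow_div_factorial_div_pow_sub_le (hL : 1 ≤ L) (ha : |a| ≤ L) (j : ℕ) :
    |(∑ m ∈ range (j + 1), (L + a) ^ m / m !) / L ^ j - (1 + j * (a + 1) / L) / j !|
      ≤ j ^ 2 * 2 ^ j * (1 + |a|) ^ 2 / L ^ 2 := by
  rcases j with _ | q
  · simp
  have hL0 : 0 < L := by linarith
  rw [sum_range_pow_div_factorial_div_pow_sub_eq hL0.ne' q]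
  set x := a / L with hx_def
  have hx : |x| ≤ 1 := by rw [abs_div, abs_of_pos hL0]; exact div_le_one_of_le₀ ha hL0.le
  have hfac : (1 : ℝ) ≤ q ! := by exact_mod_cast q.factorial_pos
  have hfac' : (1 : ℝ) ≤ (q + 1) ! := by exact_mod_cast (q + 1).factorial_pos
  have hmid : |((1 + x) ^ q - 1) / (q ! * L)| ≤ q * 2 ^ q * |a| / L ^ 2 := by
    rw [abs_div, abs_of_pos (by positivity : (0 : ℝ) < q ! * L),
      div_le_div_iff₀ (by positivity) (by positivity)]
    calc |(1 + x) ^ q - 1| * L ^ 2 ≤ q * 2 ^ q * |x| * L ^ 2 := by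
          gcongr; exact abs_one_add_pow_sub_one_le hx q
      _ = q * 2 ^ q * |a| * (1 * L) := by
          rw [hx_def, abs_div, abs_of_pos hL0]; field_simp
      _ ≤ q * 2 ^ q * |a| * (q ! * L) := by gcongr
  have htop : |((1 + x) ^ (q + 1) - (1 + (q + 1 : ℕ) * x)) / (q + 1) !|
      ≤ (q + 1 : ℕ) ^ 2 * 2 ^ (q + 1) * a ^ 2 / L ^ 2 := by
    rw [abs_div, Nat.abs_cast]
    calc _ ≤ |(1 + x) ^ (q + 1) - (1 + (q + 1 : ℕ) * x)| := div_le_self (abs_nonneg _) hfac'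
      _ ≤ (q + 1 : ℕ) ^ 2 * 2 ^ (q + 1) * x ^ 2 := abs_one_add_pow_sub_one_add_mul_le hx _
      _ = _ := by rw [hx_def, div_pow]; ring
  have hlow := abs_sum_range_pow_div_factorial_div_pow_le hL ha q
  calc _ ≤ _ := abs_add_three _ _ _
    _ ≤ q * 2 ^ q / L ^ 2 + q * 2 ^ q * |a| / L ^ 2
          + (q + 1 : ℕ) ^ 2 * 2 ^ (q + 1) * a ^ 2 / L ^ 2 := by
        rw [abs_div, abs_of_pos (by positivity : (0 : ℝ) < L ^ (q + 1))]
        gcongr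
    _ ≤ _ := by
        rw [← add_div, ← add_div]
        gcongr
        have hc : (q : ℝ) * 2 ^ q ≤ (q + 1 : ℕ) ^ 2 * 2 ^ (q + 1) := by
          push_cast; rw [pow_succ (2 : ℝ) q]
          have hq : (q : ℝ) ≤ (q + 1) ^ 2 * 2 := by nlinarith
          nlinarith [mul_le_mul_of_nonneg_right hq (pow_pos (two_pos (α := ℝ)) q).le]
        rw [← sq_abs a]
        nlinarith [mul_le_mul_of_nonneg_right hc (abs_nonneg a), abs_nonneg a,
          (by positivity : (0 : ℝ) ≤ (q + 1 : ℕ) ^ 2 * 2 ^ (q + 1) * |a|)]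

end PartialExpSum

theorem eventually_one_le_log_log_and_mul_log_log_add_le_log (j : ℕ) (b : ℝ) :
    ∀ᶠ t in atTop, 1 ≤ log (log t) ∧ j * log (log t) + b ≤ log t := by
  suffices h : ∀ᶠ L in atTop, 1 ≤ log L ∧ j * log L + b ≤ L from
    tendsto_log_atTop.eventually h
  have hsmall : (fun L ↦ j * log L + b) =o[atTop] id :=
    (isLittleO_log_id_atTop.const_mul_left _).add (isLittleO_const_id_atTop b)
  filter_upwards [tendsto_log_atTop.eventually_ge_atTop 1, hsmall.bound one_pos,
    eventually_ge_atTop 0] with L hlog hle hL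
  rw [Real.norm_eq_abs, Real.norm_eq_abs, id, abs_of_nonneg hL, one_mul] at hle
  exact ⟨hlog, (le_abs_self _).trans hle⟩

theorem mul_sum_exp_neg_log_add_mul_pow_div_factorial {t : ℝ} (ht : 0 < t) (hlog : 0 < log t)
    (j n : ℕ) (β : ℝ) :
    t * ∑ m ∈ range n, exp (-(log t + (j * log (log t) + β)))
        * (log t + (j * log (log t) + β)) ^ m / m !
      = exp (-β)
        * ((∑ m ∈ range n, (log t + (j * log (log t) + β)) ^ m / m !) / log t ^ j) := by
  have hexp : exp (-(log t + (j * log (log t) + β))) = exp (-β) / (t * log t ^ j) := by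
    rw [show -(log t + (j * log (log t) + β)) = -β - (log t + j * log (log t)) by ring,
      exp_sub, exp_add, exp_nat_mul, exp_log ht, exp_log hlog]
  simp_rw [mul_div_assoc, ← mul_sum, hexp]
  field_simp

theorem poisson_undershoot_asymptotics (k : ℕ) (hk : 1 ≤ k) (d : ℕ)
    (β f₀ : ℝ) (r : ℝ → ℝ)
    (hr : ∀ t > (0:ℝ), 0 ≤ r t ∧
      t * f₀ * ubv d * (r t)^d
        = max (Real.log t + ((k:ℝ) - 1) * Real.log (Real.log t) + β) 0) :
    ∃ C t₀ : ℝ, ∀ t ≥ t₀,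
      |t * (∑ m ∈ Finset.range k,
            Real.exp (-(t * f₀ * ubv d * (r t)^d)) * (t * f₀ * ubv d * (r t)^d)^m
              / (Nat.factorial m : ℝ))
        - Real.exp (-β) / (Nat.factorial (k-1) : ℝ) *
            (1 + ((k:ℝ) - 1)^2 * Real.log (Real.log t) / Real.log t
               + ((k:ℝ) - 1) * (1 + β) / Real.log t)|
      ≤ C * (Real.log (Real.log t) / Real.log t)^2 := by
  obtain ⟨j, rfl⟩ : ∃ j, k = j + 1 := ⟨k - 1, by omega⟩
  have hj : ((j + 1 : ℕ) : ℝ) - 1 = j := by push_cast; ring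
  simp only [hj, Nat.add_sub_cancel] at hr ⊢
  refine ⟨exp (-β) * (j ^ 2 * 2 ^ j * (1 + j + |β|) ^ 2), ?_⟩
  rw [← eventually_atTop]
  filter_upwards [eventually_one_le_log_log_and_mul_log_log_add_le_log j |β|,
    tendsto_log_atTop.eventually_ge_atTop 1, eventually_gt_atTop 0] with t ⟨hl, hlL⟩ hL1 ht
  have hsum := mul_sum_exp_neg_log_add_mul_pow_div_factorial ht (by linarith) j (j + 1) β
  set L := log t
  set l := log L
  set a := j * l + β
  have haβ : |a| ≤ j * l + |β| :=
    (abs_add_le _ _).trans_eq (by rw [abs_of_nonneg (by positivity)])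
  have ha : |a| ≤ L := haβ.trans hlL
  have hmean : t * f₀ * ubv d * r t ^ d = L + a := by
    rw [(hr t ht).2, max_eq_left (by linarith [neg_abs_le a])]
    ring
  have htarget : exp (-β) / j ! * (1 + j ^ 2 * l / L + j * (1 + β) / L)
      = exp (-β) * ((1 + j * (a + 1) / L) / j !) := by
    field_simp
    ring
  rw [hmean, hsum, htarget, ← mul_sub, abs_mul, abs_of_pos (exp_pos _), mul_assoc]
  gcongr
  calc _ ≤ j ^ 2 * 2 ^ j * (1 + |a|) ^ 2 / L ^ 2 :=
        abs_sum_range_pow_div_factorial_div_pow_sub_le hL1 ha j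
    _ ≤ j ^ 2 * 2 ^ j * ((1 + j + |β|) * l) ^ 2 / L ^ 2 := by
        gcongr
        nlinarith [abs_nonneg β, (Nat.cast_nonneg j : (0 : ℝ) ≤ j)]
    _ = _ := by ring
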